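/- arXiv:1806.07225 — 3 statements merged into one kernel-verified Lean document; each statement's English description precedes it below -/
import Mathlib

section
/- The supremum of E over A(Ω, ρ_+, ρ_−) is attained: there exists ρ* ∈ A(Ω, ρ_+, ρ_−) such that E[ρ*] = sup{ E[ρ] : ρ ∈ A(Ω, ρ_+, ρ_−) }. -/
noncomputable section

open MeasureTheory Metric Set Filter
open scoped ENNReal NNReal Topology

/-- The energy `E[ρ] = (1/2) ∫_{Ω×Ω} k(x,y) ρ(x) ρ(y) dx dy`. -/
def energy {α : Type} [MeasurableSpace α] (μ : Measure α) (Ω : Set α)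
    (k : α → α → ℝ) (ρ : α → ℝ) : ℝ :=
  (1/2 : ℝ) * ∫ x in Ω, (∫ y in Ω, k x y * ρ x * ρ y ∂μ) ∂μ

/-- The admissible class `A(Ω, ρ₊, ρ₋)`: essentially bounded densities with
`∫_Ω ρ = 1` and `ρ₋ ≤ ρ ≤ ρ₊` a.e. on `Ω`. -/
def IsAdmissible {α : Type} [MeasurableSpace α] (μ : Measure α) (Ω : Set α)
    (ρp ρm : ℝ) (ρ : α → ℝ) : Prop :=
  AEStronglyMeasurable ρ (μ.restrict Ω) ∧ (∫ x in Ω, ρ x ∂μ) = 1 ∧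
  ∀ᵐ x ∂(μ.restrict Ω), ρm ≤ ρ x ∧ ρ x ≤ ρp

/-- `f` is completely monotone on `(0, ∞)`. -/
def CompletelyMonotone (f : ℝ → ℝ) : Prop :=
  ContDiffOn ℝ (⊤ : ℕ∞) f (Set.Ioi 0) ∧
  ∀ (ℓ : ℕ), ∀ t ∈ Set.Ioi (0:ℝ), 0 ≤ (-1:ℝ) ^ ℓ * iteratedDerivWithin ℓ f (Set.Ioi 0) t

/-- `k` is a positive definite kernel on `Ω`. -/
def IsPosDefKernel {α : Type} (Ω : Set α) (k : α → α → ℝ) : Prop :=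
  ∀ (N : ℕ) (x : Fin N → α), (∀ i, x i ∈ Ω) → Function.Injective x →
    ∀ c : Fin N → ℂ, c ≠ 0 →
      0 < (∑ j, ∑ l, c j * (starRingEnd ℂ) (c l) * (k (x j) (x l) : ℂ)).re


section Aux

variable {α : Type} [MeasurableSpace α] {ν : Measure α}

/-- Lift an a.e. property to the product measure (both coordinates). -/
lemma prod_ae_lift [SFinite ν] {pr : α → Prop} (h : ∀ᵐ x ∂ν, pr x) :
    ∀ᵐ z ∂(ν.prod ν), pr z.1 ∧ pr z.2 :=
  ((Measure.quasiMeasurePreserving_fst (μ := ν) (ν := ν)).ae h).and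
    ((Measure.quasiMeasurePreserving_snd (μ := ν) (ν := ν)).ae h)

/-- Integrability of `g z * ρ z.1 * σ z.2` for integrable `g` and bounded a.e.-measurable
`ρ`, `σ`. -/
lemma integrable_kernel_mul [SFinite ν] {g : α × α → ℝ} (hg : Integrable g (ν.prod ν))
    {ρ σ : α → ℝ} {B : ℝ} (hρ : AEStronglyMeasurable ρ ν) (hσ : AEStronglyMeasurable σ ν)
    (hρb : ∀ᵐ x ∂ν, |ρ x| ≤ B) (hσb : ∀ᵐ x ∂ν, |σ x| ≤ B) :
    Integrable (fun z => g z * ρ z.1 * σ z.2) (ν.prod ν) := by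
  refine Integrable.mono' ((hg.norm.const_mul (B * B))) 
    ((hg.aestronglyMeasurable.mul hρ.comp_fst).mul hσ.comp_snd) ?_
  filter_upwards [prod_ae_lift hρb, prod_ae_lift hσb] with z h1 h2
  have hB : 0 ≤ B := le_trans (abs_nonneg _) h1.1
  have : ‖g z * ρ z.1 * σ z.2‖ = ‖g z‖ * |ρ z.1| * |σ z.2| := by
    simp [abs_mul, Real.norm_eq_abs]
  rw [this]
  calc ‖g z‖ * |ρ z.1| * |σ z.2| ≤ ‖g z‖ * B * B :=
        mul_le_mul (mul_le_mul_of_nonneg_left h1.1 (norm_nonneg _)) h2.2 (abs_nonneg _)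
          (by positivity)
    _ = B * B * ‖g z‖ := by ring

lemma kernel_mul_bound [SFinite ν] {g : α × α → ℝ} (hg : Integrable g (ν.prod ν))
    {ρ σ : α → ℝ} {B : ℝ} (hρ : AEStronglyMeasurable ρ ν) (hσ : AEStronglyMeasurable σ ν)
    (hρb : ∀ᵐ x ∂ν, |ρ x| ≤ B) (hσb : ∀ᵐ x ∂ν, |σ x| ≤ B) :
    |∫ z, g z * ρ z.1 * σ z.2 ∂(ν.prod ν)| ≤ B ^ 2 * ∫ z, |g z| ∂(ν.prod ν) := by
  have h1 : |∫ z, g z * ρ z.1 * σ z.2 ∂(ν.prod ν)| ≤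
      ∫ z, ‖g z * ρ z.1 * σ z.2‖ ∂(ν.prod ν) := by
    simpa [Real.norm_eq_abs] using
      norm_integral_le_integral_norm (μ := ν.prod ν) (f := fun z => g z * ρ z.1 * σ z.2)
  refine h1.trans ?_
  have hI2 : Integrable (fun z => B ^ 2 * |g z|) (ν.prod ν) := by
    simpa [Real.norm_eq_abs] using hg.norm.const_mul (B ^ 2)
  rw [← integral_const_mul]
  refine integral_mono_ae (integrable_kernel_mul hg hρ hσ hρb hσb).norm hI2 ?_
  filter_upwards [prod_ae_lift hρb, prod_ae_lift hσb] with z h1 h2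
  have hB : 0 ≤ B := le_trans (abs_nonneg _) h1.1
  have he : ‖g z * ρ z.1 * σ z.2‖ = |g z| * |ρ z.1| * |σ z.2| := by
    simp [abs_mul, Real.norm_eq_abs]
  rw [he]
  calc |g z| * |ρ z.1| * |σ z.2| ≤ |g z| * B * B :=
        mul_le_mul (mul_le_mul_of_nonneg_left h1.1 (abs_nonneg _)) h2.2 (abs_nonneg _)
          (by positivity)
    _ = B ^ 2 * |g z| := by ring

end Aux

section MaxAux
open scoped RealInnerProductSpace

variable {α : Type} [MeasurableSpace α]

set_option maxHeartbeats 2000000 in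
theorem exists_max_aux (ν : Measure α) [IsFiniteMeasure ν]
    (hν0 : ν Set.univ ≠ 0)
    (k : α × α → ℝ) (hint : Integrable k (ν.prod ν))
    (happrox : ∀ ε > (0:ℝ), ∃ (N : ℕ) (c : ℕ → ℕ → ℝ) (A : ℕ → Set α),
      (∀ i, MeasurableSet (A i)) ∧
      ∫ z, |k z - ∑ i ∈ Finset.range N, ∑ j ∈ Finset.range N,
        c i j * (A i).indicator 1 z.1 * (A j).indicator 1 z.2| ∂(ν.prod ν) < ε)
    (ρp ρm : ℝ) (hρm : 0 < ρm) (hρm' : ρm ≤ (ν Set.univ).toReal⁻¹)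
    (hρp : (ν Set.univ).toReal⁻¹ ≤ ρp) :
    ∃ ρstar : α → ℝ,
      (AEStronglyMeasurable ρstar ν ∧ (∫ x, ρstar x ∂ν) = 1 ∧
        ∀ᵐ x ∂ν, ρm ≤ ρstar x ∧ ρstar x ≤ ρp) ∧
      ∀ ρ : α → ℝ, (AEStronglyMeasurable ρ ν ∧ (∫ x, ρ x ∂ν) = 1 ∧
        ∀ᵐ x ∂ν, ρm ≤ ρ x ∧ ρ x ≤ ρp) →
        ∫ z, k z * ρ z.1 * ρ z.2 ∂(ν.prod ν) ≤ ∫ z, k z * ρstar z.1 * ρstar z.2 ∂(ν.prod ν) := by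
  classical
  have hρp0 : 0 < ρp := lt_of_lt_of_le hρm (hρm'.trans hρp)
  set H := Lp (α := α) ℝ 2 ν with hH
  set D := InnerProductSpace.toDual ℝ H with hD
  set rep : WeakDual ℝ H → α → ℝ := fun φ => ⇑(D.symm (WeakDual.toStrongDual φ)) with hrep
  have hrepmeas : ∀ φ, AEStronglyMeasurable (rep φ) ν := fun φ => Lp.aestronglyMeasurable _
  have hrep2 : ∀ φ, MemLp (rep φ) 2 ν := fun φ => Lp.memLp _
  set ind : ∀ s : Set α, MeasurableSet s → H :=
    fun s hs => indicatorConstLp 2 hs (measure_ne_top ν s) (1:ℝ) with hind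
  -- pairing identity
  have hpair : ∀ (φ : WeakDual ℝ H) (s : Set α) (hs : MeasurableSet s),
      φ (ind s hs) = ∫ x in s, rep φ x ∂ν := by
    intro φ s hs
    have h1 : (inner ℝ (D.symm (WeakDual.toStrongDual φ)) (ind s hs) : ℝ) = φ (ind s hs) :=
      InnerProductSpace.toDual_symm_apply
    rw [← h1, real_inner_comm]
    rw [hind]
    rw [L2.inner_indicatorConstLp_eq_setIntegral_inner ℝ _ hs (1:ℝ) (measure_ne_top ν s)]
    simp [RCLike.inner_apply]
    rfl
  -- the norm bound
  set R : ℝ := ((ν Set.univ) ^ ((2:ℝ≥0∞).toReal⁻¹) * ENNReal.ofReal ρp).toReal with hR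
  have hnormle : ∀ (ρ : α → ℝ) (h2 : MemLp ρ 2 ν), (∀ᵐ x ∂ν, |ρ x| ≤ ρp) → ‖h2.toLp ρ‖ ≤ R := by
    intro ρ h2 hb
    rw [Lp.norm_toLp]
    refine ENNReal.toReal_mono ?_ ?_
    · exact ENNReal.mul_ne_top (ENNReal.rpow_ne_top_of_nonneg (by positivity)
        (measure_ne_top ν _)) ENNReal.ofReal_ne_top
    · refine eLpNorm_le_of_ae_bound ?_
      filter_upwards [hb] with x hx
      simpa [Real.norm_eq_abs] using hx
  -- the admissible set in the weak dual
  set C : Set (WeakDual ℝ H) :=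
    {φ | ‖WeakDual.toStrongDual φ‖ ≤ R} ∩
    ({φ | φ (ind Set.univ MeasurableSet.univ) = 1} ∩
     {φ | ∀ s : Set α, ∀ hs : MeasurableSet s,
        ρm * (ν s).toReal ≤ φ (ind s hs) ∧ φ (ind s hs) ≤ ρp * (ν s).toReal}) with hC
  have hCcompact : IsCompact C := by
    have h1 : IsCompact {φ : WeakDual ℝ H | ‖WeakDual.toStrongDual φ‖ ≤ R} := by
      have h2 := WeakDual.isCompact_closedBall (𝕜 := ℝ) (E := H) 0 R
      convert h2 using 1
      ext φ
      simp [Metric.mem_closedBall, dist_zero_right]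
    refine h1.inter_right (IsClosed.inter ?_ ?_)
    · exact isClosed_eq (WeakDual.eval_continuous _) continuous_const
    · have heq : {φ : WeakDual ℝ H | ∀ s : Set α, ∀ hs : MeasurableSet s,
          ρm * (ν s).toReal ≤ φ (ind s hs) ∧ φ (ind s hs) ≤ ρp * (ν s).toReal}
          = ⋂ (s : Set α), ⋂ (hs : MeasurableSet s),
            ({φ : WeakDual ℝ H | ρm * (ν s).toReal ≤ φ (ind s hs)} ∩
             {φ : WeakDual ℝ H | φ (ind s hs) ≤ ρp * (ν s).toReal}) := by
        ext φ; simp only [Set.mem_setOf_eq, Set.mem_iInter, Set.mem_inter_iff]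
      rw [heq]
      exact isClosed_iInter fun s => isClosed_iInter fun hs =>
        (isClosed_le continuous_const (WeakDual.eval_continuous _)).inter
        (isClosed_le (WeakDual.eval_continuous _) continuous_const)
  -- membership of admissible densities
  have hmemC : ∀ (ρ : α → ℝ) (h2 : MemLp ρ 2 ν),
      (∫ x, ρ x ∂ν) = 1 → (∀ᵐ x ∂ν, ρm ≤ ρ x ∧ ρ x ≤ ρp) →
      StrongDual.toWeakDual (D (h2.toLp ρ)) ∈ C ∧
      rep (StrongDual.toWeakDual (D (h2.toLp ρ))) =ᵐ[ν] ρ := by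
    intro ρ h2 hI hb
    have habs : ∀ᵐ x ∂ν, |ρ x| ≤ ρp := by
      filter_upwards [hb] with x hx
      exact abs_le.2 ⟨by linarith [hx.1], hx.2⟩
    have hae : rep (StrongDual.toWeakDual (D (h2.toLp ρ))) =ᵐ[ν] ρ := by
      have h0 : D.symm (WeakDual.toStrongDual (StrongDual.toWeakDual (D (h2.toLp ρ))))
          = h2.toLp ρ := by
        rw [show WeakDual.toStrongDual (StrongDual.toWeakDual (D (h2.toLp ρ)))
            = D (h2.toLp ρ) from rfl, LinearIsometryEquiv.symm_apply_apply]
      show (⇑(D.symm (WeakDual.toStrongDual (StrongDual.toWeakDual (D (h2.toLp ρ)))))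
        : α → ℝ) =ᵐ[ν] ρ
      rw [h0]
      exact h2.coeFn_toLp
    have hIρ : Integrable ρ ν := h2.integrable one_le_two
    refine ⟨⟨?_, ?_, ?_⟩, hae⟩
    · show ‖WeakDual.toStrongDual (StrongDual.toWeakDual (D (h2.toLp ρ)))‖ ≤ R
      rw [show WeakDual.toStrongDual (StrongDual.toWeakDual (D (h2.toLp ρ)))
          = D (h2.toLp ρ) from rfl, LinearIsometryEquiv.norm_map]
      exact hnormle ρ h2 habs
    · show _ = 1
      rw [hpair _ Set.univ MeasurableSet.univ, setIntegral_univ, integral_congr_ae hae, hI]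
    · intro s hs
      rw [hpair _ s hs, integral_congr_ae (ae_restrict_of_ae hae)]
      constructor
      · have hmono : ∫ _ in s, (ρm : ℝ) ∂ν ≤ ∫ x in s, ρ x ∂ν :=
          setIntegral_mono_ae_restrict (integrableOn_const (measure_ne_top ν s))
            hIρ.integrableOn (ae_restrict_of_ae (hb.mono fun x hx => hx.1))
        rw [setIntegral_const, measureReal_def] at hmono
        simpa [smul_eq_mul, mul_comm] using hmono
      · have hmono : ∫ x in s, ρ x ∂ν ≤ ∫ _ in s, (ρp : ℝ) ∂ν :=
          setIntegral_mono_ae_restrict hIρ.integrableOn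
            (integrableOn_const (measure_ne_top ν s))
            (ae_restrict_of_ae (hb.mono fun x hx => hx.2))
        rw [setIntegral_const, measureReal_def] at hmono
        simpa [smul_eq_mul, mul_comm] using hmono
  -- members of C are admissible
  have hadm_of_mem : ∀ φ, φ ∈ C → (AEStronglyMeasurable (rep φ) ν ∧ (∫ x, rep φ x ∂ν) = 1 ∧
      ∀ᵐ x ∂ν, ρm ≤ rep φ x ∧ rep φ x ≤ ρp) := by
    intro φ hφ
    obtain ⟨-, hφ1, hφ2⟩ := hφ
    have hIρ : Integrable (rep φ) ν := (hrep2 φ).integrable one_le_two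
    refine ⟨hrepmeas φ, ?_, ?_⟩
    · have h0 := hpair φ Set.univ MeasurableSet.univ
      rw [setIntegral_univ] at h0
      rw [← h0]; exact hφ1
    · have hlow : ∀ᵐ x ∂ν, ρm ≤ rep φ x := by
        have h := ae_nonneg_of_forall_setIntegral_nonneg (f := fun x => rep φ x - ρm)
          (hIρ.sub (integrable_const ρm)) ?_
        · filter_upwards [h] with x hx
          simpa using hx
        · intro s hs hνs
          rw [integral_sub hIρ.integrableOn (integrableOn_const hνs.ne)]
          have h1 := (hφ2 s hs).1
          rw [hpair φ s hs] at h1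
          rw [setIntegral_const, measureReal_def]
          simp only [smul_eq_mul]
          nlinarith [h1]
      have hupp : ∀ᵐ x ∂ν, rep φ x ≤ ρp := by
        have h := ae_nonneg_of_forall_setIntegral_nonneg (f := fun x => ρp - rep φ x)
          ((integrable_const ρp).sub hIρ) ?_
        · filter_upwards [h] with x hx
          simpa using hx
        · intro s hs hνs
          rw [integral_sub (integrableOn_const (C := ρp) hνs.ne) hIρ.integrableOn]
          have h1 := (hφ2 s hs).2
          rw [hpair φ s hs] at h1
          rw [setIntegral_const, measureReal_def]
          simp only [smul_eq_mul]
          nlinarith [h1]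
      exact hlow.and hupp
  -- C is nonempty
  have htR : (ν Set.univ).toReal ≠ 0 := ENNReal.toReal_ne_zero.2 ⟨hν0, measure_ne_top ν Set.univ⟩
  have hconst2 : MemLp (fun _ : α => (ν Set.univ).toReal⁻¹) 2 ν := memLp_const _
  have hconstI : (∫ x, (fun _ : α => (ν Set.univ).toReal⁻¹) x ∂ν) = 1 := by
    simp only [integral_const, smul_eq_mul]
    exact mul_inv_cancel₀ htR
  have hconstb : ∀ᵐ x ∂ν, ρm ≤ (fun _ : α => (ν Set.univ).toReal⁻¹) x ∧
      (fun _ : α => (ν Set.univ).toReal⁻¹) x ≤ ρp :=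
    Eventually.of_forall fun _ => ⟨hρm', hρp⟩
  have hφ0 := hmemC _ hconst2 hconstI hconstb
  have hCne : C.Nonempty := ⟨_, hφ0.1⟩
  -- bound on members of C
  have hCbound : ∀ φ ∈ C, ∀ᵐ x ∂ν, |rep φ x| ≤ ρp := by
    intro φ hφ
    filter_upwards [(hadm_of_mem φ hφ).2.2] with x hx
    exact abs_le.2 ⟨by linarith [hx.1], hx.2⟩
  -- finite rank approximations
  choose Nf cf Af hAf hL1 using fun n : ℕ => happrox (1/(n+1)) (by positivity)
  set g : ℕ → α × α → ℝ := fun n z => ∑ i ∈ Finset.range (Nf n), ∑ j ∈ Finset.range (Nf n),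
    cf n i j * (Af n i).indicator 1 z.1 * (Af n j).indicator 1 z.2 with hg
  have hindInt : ∀ (n : ℕ) (i : ℕ), Integrable ((Af n i).indicator (1 : α → ℝ)) ν :=
    fun n i => (integrable_const (1:ℝ)).indicator (hAf n i)
  have hgInt : ∀ n, Integrable (g n) (ν.prod ν) := by
    intro n
    refine integrable_finset_sum _ fun i _ => integrable_finset_sum _ fun j _ => ?_
    have h0 := ((hindInt n i).mul_prod (hindInt n j)).const_mul (cf n i j)
    simpa [mul_assoc] using h0
  set F : ℕ → WeakDual ℝ H → ℝ := fun n φ =>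
    ∑ i ∈ Finset.range (Nf n), ∑ j ∈ Finset.range (Nf n),
      cf n i j * (φ (ind (Af n i) (hAf n i)) * φ (ind (Af n j) (hAf n j))) with hF
  have hFcont : ∀ n, Continuous (F n) := by
    intro n
    refine continuous_finset_sum _ fun i _ => continuous_finset_sum _ fun j _ => ?_
    exact continuous_const.mul ((WeakDual.eval_continuous _).mul (WeakDual.eval_continuous _))
  -- F n φ computes the energy of the approximate kernel
  have hFeq : ∀ n φ, F n φ = ∫ z, g n z * rep φ z.1 * rep φ z.2 ∂(ν.prod ν) := by
    intro n φ
    set u : ℕ → α → ℝ := fun i x => (Af n i).indicator (1 : α → ℝ) x * rep φ x with hu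
    have huind : ∀ i, u i = (Af n i).indicator (rep φ) := by
      intro i; funext x
      by_cases hx : x ∈ Af n i <;> simp [hu, Set.indicator, hx]
    have huInt : ∀ i, Integrable (u i) ν := by
      intro i
      rw [huind i]
      exact ((hrep2 φ).integrable one_le_two).indicator (hAf n i)
    have huint_eq : ∀ i, ∫ x, u i x ∂ν = φ (ind (Af n i) (hAf n i)) := by
      intro i
      rw [huind i, integral_indicator (hAf n i), ← hpair φ _ (hAf n i)]
    have hinteg : (fun z : α × α => g n z * rep φ z.1 * rep φ z.2)
        = fun z => ∑ i ∈ Finset.range (Nf n), ∑ j ∈ Finset.range (Nf n),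
            cf n i j * (u i z.1 * u j z.2) := by
      funext z
      rw [hg]
      simp only
      rw [Finset.sum_mul, Finset.sum_mul]
      refine Finset.sum_congr rfl fun i _ => ?_
      rw [Finset.sum_mul, Finset.sum_mul]
      refine Finset.sum_congr rfl fun j _ => ?_
      simp only [hu]
      ring
    rw [hinteg, integral_finset_sum]
    · refine Finset.sum_congr rfl fun i _ => ?_
      rw [integral_finset_sum]
      · refine Finset.sum_congr rfl fun j _ => ?_
        rw [integral_const_mul, integral_prod_mul, huint_eq i, huint_eq j]
      · exact fun j _ => ((huInt i).mul_prod (huInt j)).const_mul _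
    · intro i _
      refine integrable_finset_sum _ fun j _ => ((huInt i).mul_prod (huInt j)).const_mul _
  -- uniform convergence on C
  set T : WeakDual ℝ H → ℝ := fun φ => ∫ z, k z * rep φ z.1 * rep φ z.2 ∂(ν.prod ν) with hT
  have hTunif : TendstoUniformlyOn F T atTop C := by
    rw [Metric.tendstoUniformlyOn_iff]
    intro ε hε
    have hten : Tendsto (fun n : ℕ => ρp ^ 2 * (1/(n+1))) atTop (𝓝 (ρp ^ 2 * 0)) :=
      tendsto_one_div_add_atTop_nhds_zero_nat.const_mul _
    rw [mul_zero] at hten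
    filter_upwards [hten.eventually_lt_const hε] with n hn φ hφ
    have hb := hCbound φ hφ
    have hIk := integrable_kernel_mul hint (hrepmeas φ) (hrepmeas φ) hb hb
    have hIg := integrable_kernel_mul (hgInt n) (hrepmeas φ) (hrepmeas φ) hb hb
    rw [Real.dist_eq, hFeq n φ, hT]
    have hsub : (∫ z, k z * rep φ z.1 * rep φ z.2 ∂(ν.prod ν))
        - (∫ z, g n z * rep φ z.1 * rep φ z.2 ∂(ν.prod ν))
        = ∫ z, (k z - g n z) * rep φ z.1 * rep φ z.2 ∂(ν.prod ν) := by
      rw [← integral_sub hIk hIg]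
      congr 1; funext z; ring
    rw [hsub]
    have hbound := kernel_mul_bound (hint.sub (hgInt n)) (hrepmeas φ) (hrepmeas φ) hb hb
    refine lt_of_le_of_lt (hbound.trans ?_) hn
    have h1 : ∫ z, |k z - g n z| ∂(ν.prod ν) ≤ 1/(n+1) := by
      have := hL1 n
      exact this.le
    have := mul_le_mul_of_nonneg_left h1 (sq_nonneg ρp)
    simpa using this
  have hTcont : ContinuousOn T C :=
    hTunif.continuousOn (Eventually.of_forall fun n => (hFcont n).continuousOn).frequently
  -- extreme value theorem
  obtain ⟨φs, hφsC, hφsmax⟩ := hCcompact.exists_isMaxOn hCne hTcont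
  refine ⟨rep φs, hadm_of_mem φs hφsC, ?_⟩
  rintro ρ ⟨hρmeas, hρI, hρb⟩
  have hρ2 : MemLp ρ 2 ν := by
    refine MemLp.of_bound hρmeas ρp ?_
    filter_upwards [hρb] with x hx
    rw [Real.norm_eq_abs]
    exact abs_le.2 ⟨by linarith [hx.1], hx.2⟩
  obtain ⟨hφρC, hφρae⟩ := hmemC ρ hρ2 hρI hρb
  have hTeq : T (StrongDual.toWeakDual (D (hρ2.toLp ρ)))
      = ∫ z, k z * ρ z.1 * ρ z.2 ∂(ν.prod ν) := by
    refine integral_congr_ae ?_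
    filter_upwards [prod_ae_lift (hφρae.mono fun x hx => hx)] with z hz
    rw [hz.1, hz.2]
  have hle := isMaxOn_iff.mp hφsmax _ hφρC
  rw [hTeq] at hle
  exact hle

end MaxAux

section CM

lemma cm_nonneg {f : ℝ → ℝ} (hf : CompletelyMonotone f) : ∀ t ∈ Set.Ioi (0:ℝ), 0 ≤ f t := by
  intro t ht
  have h := hf.2 0 t ht
  simpa [iteratedDerivWithin_zero] using h

lemma cm_antitoneOn {f : ℝ → ℝ} (hf : CompletelyMonotone f) : AntitoneOn f (Set.Ioi 0) := by
  have hcont : ContinuousOn f (Set.Ioi 0) := hf.1.continuousOn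
  have hdiff : DifferentiableOn ℝ f (Set.Ioi 0) := hf.1.differentiableOn (by simp)
  refine antitoneOn_of_deriv_nonpos (convex_Ioi 0) hcont (by rwa [interior_Ioi]) ?_
  intro t ht
  rw [interior_Ioi] at ht
  have h1 := hf.2 1 t ht
  rw [iteratedDerivWithin_one,
    derivWithin_of_mem_nhds (isOpen_Ioi.mem_nhds ht)] at h1
  simpa using h1

end CM

/-- The supremum of `E` over `A(Ω, ρ₊, ρ₋)` is attained. -/
theorem stmt_2 {p : ℕ} (d : ℕ) (hd : 0 < d) (hdp : d ≤ p)
    (Ω : Set (EuclideanSpace ℝ (Fin p))) (hΩcomp : IsCompact Ω) (hΩinf : Ω.Infinite)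
    (hΩpos : μH[d] Ω ≠ 0) (hΩfin : μH[d] Ω ≠ ⊤)
    (f : ℝ → ℝ) (k : EuclideanSpace ℝ (Fin p) → EuclideanSpace ℝ (Fin p) → ℝ)
    (hkf : ∀ x ∈ Ω, ∀ y ∈ Ω, k x y = f (dist x y))
    (hkpos : ∀ x ∈ Ω, ∀ y ∈ Ω, 0 < k x y)
    (hf : CompletelyMonotone f)
    (hpd : IsPosDefKernel Ω k)
    (hint : Integrable
      (fun z : EuclideanSpace ℝ (Fin p) × EuclideanSpace ℝ (Fin p) => k z.1 z.2)
      (((μH[d]).restrict Ω).prod ((μH[d]).restrict Ω)))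
    (ρp ρm : ℝ) (hρm : 0 < ρm) (hρm' : ρm ≤ ((μH[d]) Ω).toReal⁻¹)
    (hρp : ((μH[d]) Ω).toReal⁻¹ ≤ ρp) :
    ∃ ρstar, IsAdmissible (μH[d]) Ω ρp ρm ρstar ∧
      ∀ ρ, IsAdmissible (μH[d]) Ω ρp ρm ρ →
        energy (μH[d]) Ω k ρ ≤ energy (μH[d]) Ω k ρstar := by
  classical
  have hΩm : MeasurableSet Ω := hΩcomp.isClosed.measurableSet
  set ν : Measure (EuclideanSpace ℝ (Fin p)) := (μH[d]).restrict Ω with hν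
  haveI : IsFiniteMeasure ν := ⟨by rw [hν, Measure.restrict_apply_univ]; exact lt_top_iff_ne_top.2 hΩfin⟩
  have hνuniv : ν Set.univ = μH[d] Ω := by rw [hν, Measure.restrict_apply_univ]
  have hν0 : ν Set.univ ≠ 0 := by rw [hνuniv]; exact hΩpos
  have happrox : ∀ ε > (0:ℝ), ∃ (N : ℕ) (c : ℕ → ℕ → ℝ) (A : ℕ → Set (EuclideanSpace ℝ (Fin p))),
      (∀ i, MeasurableSet (A i)) ∧
      ∫ z, |(fun z : EuclideanSpace ℝ (Fin p) × EuclideanSpace ℝ (Fin p) => k z.1 z.2) z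
          - ∑ i ∈ Finset.range N, ∑ j ∈ Finset.range N,
        c i j * (A i).indicator 1 z.1 * (A j).indicator 1 z.2| ∂(ν.prod ν) < ε := by
    have hνc : ν Ωᶜ = 0 := by
      rw [hν, Measure.restrict_apply (MeasurableSet.compl hΩm)]
      simp
    have hPae : ∀ᵐ z ∂(ν.prod ν), z ∈ Ω ×ˢ Ω := by
      rw [ae_iff]
      refine measure_mono_null (fun z hz => ?_) (?_ :
        (ν.prod ν) ((Ωᶜ ×ˢ Set.univ) ∪ (Set.univ ×ˢ Ωᶜ)) = 0)
      · have hz' : ¬ (z.1 ∈ Ω ∧ z.2 ∈ Ω) := hz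
        rcases not_and_or.1 hz' with h | h
        · exact Or.inl ⟨h, Set.mem_univ _⟩
        · exact Or.inr ⟨Set.mem_univ _, h⟩
      · refine le_antisymm (le_trans (measure_union_le _ _) ?_) (zero_le)
        rw [Measure.prod_prod, Measure.prod_prod, hνc]
        simp
    have hsing : ∀ x : EuclideanSpace ℝ (Fin p), μH[d] {x} = 0 := by
      intro x
      have h0 : dimH ({x} : Set (EuclideanSpace ℝ (Fin p))) = 0 := dimH_singleton x
      have h1 := hausdorffMeasure_of_dimH_lt (s := ({x} : Set (EuclideanSpace ℝ (Fin p))))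
        (d := (d : ℝ≥0)) (by rw [h0]; exact_mod_cast hd)
      convert h1 using 2
      simp
    have hdiag : (ν.prod ν) {z : EuclideanSpace ℝ (Fin p) × EuclideanSpace ℝ (Fin p)
        | z.1 = z.2} = 0 := by
      have hdm : MeasurableSet {z : EuclideanSpace ℝ (Fin p) × EuclideanSpace ℝ (Fin p)
          | z.1 = z.2} := isClosed_diagonal.measurableSet
      rw [Measure.prod_apply hdm]
      have hx0 : ∀ x : EuclideanSpace ℝ (Fin p),
          ν (Prod.mk x ⁻¹' {z : EuclideanSpace ℝ (Fin p) × EuclideanSpace ℝ (Fin p)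
            | z.1 = z.2}) = 0 := by
        intro x
        have hpre : (Prod.mk x ⁻¹' {z : EuclideanSpace ℝ (Fin p) × EuclideanSpace ℝ (Fin p)
            | z.1 = z.2}) = {x} := by
          ext y; simp [eq_comm]
        rw [hpre, hν, Measure.restrict_apply (measurableSet_singleton x)]
        exact measure_mono_null Set.inter_subset_left (hsing x)
      simp only [hx0, lintegral_zero]
    have hae2 : ∀ᵐ z ∂(ν.prod ν), z ∈ Ω ×ˢ Ω ∧ z.1 ≠ z.2 := by
      refine hPae.and ?_
      rw [ae_iff]
      simpa using hdiag
    intro ε hε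
    set q : ℕ → EuclideanSpace ℝ (Fin p) × EuclideanSpace ℝ (Fin p) → ℝ :=
      fun n z => min (f (max (dist z.1 z.2) (1/(n+1)))) n with hqdef
    have hqcont : ∀ n, Continuous (q n) := by
      intro n
      have h1 : Continuous fun z : EuclideanSpace ℝ (Fin p) × EuclideanSpace ℝ (Fin p) =>
          max (dist z.1 z.2) (1/(n+1)) :=
        (continuous_fst.dist continuous_snd).max continuous_const
      have h2 : ∀ z : EuclideanSpace ℝ (Fin p) × EuclideanSpace ℝ (Fin p),
          max (dist z.1 z.2) (1/(n+1)) ∈ Set.Ioi (0:ℝ) := fun z =>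
        lt_of_lt_of_le (show (0:ℝ) < 1/((n:ℝ)+1) by positivity) (le_max_right _ _)
      exact (hf.1.continuousOn.comp_continuous h1 h2).min continuous_const
    have hq0 : ∀ n, ∀ᵐ z ∂(ν.prod ν), 0 ≤ q n z ∧ q n z ≤ k z.1 z.2 := by
      intro n
      filter_upwards [hae2] with z hz
      have ht : 0 < dist z.1 z.2 := dist_pos.2 hz.2
      have hmaxmem : max (dist z.1 z.2) (1/(n+1)) ∈ Set.Ioi (0:ℝ) :=
        lt_of_lt_of_le ht (le_max_left _ _)
      constructor
      · exact le_min (cm_nonneg hf _ hmaxmem) (Nat.cast_nonneg n)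
      · rw [hkf z.1 hz.1.1 z.2 hz.1.2]
        exact (min_le_left _ _).trans (cm_antitoneOn hf ht hmaxmem (le_max_left _ _))
    have hqlim : ∀ᵐ z ∂(ν.prod ν), Tendsto (fun n => q n z) atTop (𝓝 (k z.1 z.2)) := by
      filter_upwards [hae2] with z hz
      have ht : 0 < dist z.1 z.2 := dist_pos.2 hz.2
      rw [hkf z.1 hz.1.1 z.2 hz.1.2]
      refine tendsto_atTop_of_eventually_const
        (i₀ := max ⌈(dist z.1 z.2)⁻¹⌉₊ ⌈f (dist z.1 z.2)⌉₊) ?_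
      intro n hn
      have hinv : (dist z.1 z.2)⁻¹ ≤ (n:ℝ) + 1 := by
        refine le_trans (Nat.le_ceil _) ?_
        have : (⌈(dist z.1 z.2)⁻¹⌉₊ : ℝ) ≤ (n : ℝ) :=
          Nat.cast_le.2 (le_trans (le_max_left _ _) hn)
        linarith
      have h1 : 1/((n:ℝ)+1) ≤ dist z.1 z.2 := by
        rw [one_div]
        have h2 := inv_anti₀ (inv_pos.2 ht) hinv
        rwa [inv_inv] at h2
      have h2 : f (dist z.1 z.2) ≤ (n:ℝ) :=
        le_trans (Nat.le_ceil _) (Nat.cast_le.2 (le_trans (le_max_right _ _) hn))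
      show min (f (max (dist z.1 z.2) (1/((n:ℝ)+1)))) (n:ℝ) = f (dist z.1 z.2)
      rw [max_eq_left h1, min_eq_left h2]
    have hconv : Tendsto (fun n => ∫ z, |k z.1 z.2 - q n z| ∂(ν.prod ν)) atTop (𝓝 0) := by
      have h0 : (0:ℝ) = ∫ _ : EuclideanSpace ℝ (Fin p) × EuclideanSpace ℝ (Fin p),
          (0:ℝ) ∂(ν.prod ν) := by simp
      rw [h0]
      refine tendsto_integral_of_dominated_convergence (fun z => |k z.1 z.2|) ?_ ?_ ?_ ?_
      · exact fun n => (hint.aestronglyMeasurable.sub (hqcont n).aestronglyMeasurable).norm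
      · exact hint.abs
      · intro n
        filter_upwards [hq0 n] with z hz
        rw [Real.norm_eq_abs, abs_abs, abs_of_nonneg (by linarith [hz.1, hz.2]),
          abs_of_nonneg (le_trans hz.1 hz.2)]
        linarith [hz.1]
      · filter_upwards [hqlim] with z hz
        have h3 := (tendsto_const_nhds (x := k z.1 z.2) (f := atTop)).sub hz
        rw [sub_self] at h3
        simpa using h3.abs
    obtain ⟨n₀, hn₀⟩ := (hconv.eventually_lt_const (half_pos hε)).exists
    -- uniform continuity of the truncated kernel on the compact product
    have hucont := ((hΩcomp.prod hΩcomp).uniformContinuousOn_of_continuous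
      (hqcont n₀).continuousOn)
    set m : ℝ := (ν Set.univ).toReal * (ν Set.univ).toReal with hm
    have hm0 : 0 ≤ m := mul_nonneg ENNReal.toReal_nonneg ENNReal.toReal_nonneg
    set ε' : ℝ := ε / (2 * (m + 1)) with hε'def
    have hε'0 : 0 < ε' := by rw [hε'def]; positivity
    obtain ⟨r, hr0, hrH⟩ := Metric.uniformContinuousOn_iff.1 hucont ε' hε'0
    obtain ⟨t, hts, htfin, htcover⟩ := hΩcomp.finite_cover_balls hr0
    set L := htfin.toFinset.toList with hL
    set N := L.length with hN
    set cpt : ℕ → EuclideanSpace ℝ (Fin p) := fun i => L.getD i 0 with hcpt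
    have hcmem : ∀ i, i < N → cpt i ∈ t := by
      intro i hi
      show L.getD i 0 ∈ t
      rw [List.getD_eq_getElem L 0 hi]
      have h9 := List.getElem_mem (l := L) (n := i) hi
      exact htfin.mem_toFinset.1 (Finset.mem_toList.1 h9)
    set Bs : ℕ → Set (EuclideanSpace ℝ (Fin p)) :=
      fun i => if i < N then Ω ∩ ball (cpt i) r else ∅ with hBs
    have hBmeas : ∀ i, MeasurableSet (Bs i) := by
      intro i
      rw [hBs]
      by_cases hi : i < N
      · simp only [if_pos hi]
        exact hΩm.inter measurableSet_ball
      · simp only [if_neg hi]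
        exact MeasurableSet.empty
    set As := disjointed Bs with hAs
    have hAmeas : ∀ i, MeasurableSet (As i) := MeasurableSet.disjointed hBmeas
    have hAsub : ∀ i, As i ⊆ Bs i := fun i => disjointed_le Bs i
    have hAdisj := disjoint_disjointed Bs
    have hcover : ∀ x ∈ Ω, ∃ i, i < N ∧ x ∈ As i := by
      intro x hx
      have hx2 : x ∈ ⋃ i, Bs i := by
        obtain ⟨z, hzt, hzball⟩ := Set.mem_iUnion₂.1 (htcover hx)
        have hzL : z ∈ L := Finset.mem_toList.2 (htfin.mem_toFinset.2 hzt)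
        obtain ⟨i, hi, hzi⟩ := List.mem_iff_getElem.1 hzL
        refine Set.mem_iUnion.2 ⟨i, ?_⟩
        rw [hBs]
        show x ∈ (if i < N then Ω ∩ ball (cpt i) r else ∅); rw [if_pos hi]
        refine ⟨hx, ?_⟩
        show x ∈ ball (cpt i) r
        rw [hcpt]
        simp only
        rw [List.getD_eq_getElem L 0 hi, hzi]
        exact hzball
      rw [← iUnion_disjointed] at hx2
      obtain ⟨i, hxi⟩ := Set.mem_iUnion.1 hx2
      refine ⟨i, ?_, hxi⟩
      by_contra hiN
      have h5 : As i ⊆ Bs i := hAsub i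
      rw [hBs] at h5
      simp only [if_neg hiN] at h5
      exact h5 hxi
    set g : EuclideanSpace ℝ (Fin p) × EuclideanSpace ℝ (Fin p) → ℝ :=
      fun z => ∑ i ∈ Finset.range N, ∑ j ∈ Finset.range N,
        q n₀ (cpt i, cpt j) * (As i).indicator 1 z.1 * (As j).indicator 1 z.2 with hgdef
    have hgval : ∀ z ∈ Ω ×ˢ Ω, |q n₀ z - g z| ≤ ε' := by
      rintro z hz
      obtain ⟨i, hiN, hxi⟩ := hcover z.1 hz.1
      obtain ⟨j, hjN, hyj⟩ := hcover z.2 hz.2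
      have hgz : g z = q n₀ (cpt i, cpt j) := by
        rw [hgdef]
        simp only
        rw [Finset.sum_eq_single_of_mem i (Finset.mem_range.2 hiN)]
        · rw [Finset.sum_eq_single_of_mem j (Finset.mem_range.2 hjN)]
          · rw [Set.indicator_of_mem hxi, Set.indicator_of_mem hyj]
            simp
          · intro b _ hbj
            rw [Set.indicator_of_notMem (Set.disjoint_right.1 (hAdisj hbj) hyj)]
            ring
        · intro b _ hbi
          refine Finset.sum_eq_zero fun j' _ => ?_
          rw [Set.indicator_of_notMem (Set.disjoint_right.1 (hAdisj hbi) hxi)]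
          ring
      rw [hgz]
      have hxiB : z.1 ∈ Bs i := hAsub i hxi
      have hyjB : z.2 ∈ Bs j := hAsub j hyj
      rw [hBs] at hxiB hyjB
      simp only [if_pos hiN] at hxiB
      simp only [if_pos hjN] at hyjB
      have hdistz : dist z (cpt i, cpt j) < r := by
        rw [Prod.dist_eq]
        exact max_lt (mem_ball.1 hxiB.2) (mem_ball.1 hyjB.2)
      have hcptΩ : ((cpt i, cpt j) : EuclideanSpace ℝ (Fin p) × EuclideanSpace ℝ (Fin p))
          ∈ Ω ×ˢ Ω := ⟨hts (hcmem i hiN), hts (hcmem j hjN)⟩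
      have h6 := hrH z hz (cpt i, cpt j) hcptΩ hdistz
      rw [Real.dist_eq] at h6
      exact h6.le
    -- integrability facts
    have hq'Int : Integrable (q n₀) (ν.prod ν) := by
      refine ⟨(hqcont n₀).aestronglyMeasurable, HasFiniteIntegral.of_bounded (C := n₀) ?_⟩
      refine Eventually.of_forall fun z => ?_
      rw [Real.norm_eq_abs, abs_of_nonneg]
      · exact min_le_right _ _
      · refine le_min (cm_nonneg hf _ ?_) (Nat.cast_nonneg n₀)
        exact lt_of_lt_of_le (show (0:ℝ) < 1/((n₀:ℝ)+1) by positivity) (le_max_right _ _)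
    have hindInt : ∀ i : ℕ, Integrable ((As i).indicator (1 : EuclideanSpace ℝ (Fin p) → ℝ)) ν :=
      fun i => (integrable_const (1:ℝ)).indicator (hAmeas i)
    have hgInt : Integrable g (ν.prod ν) := by
      rw [hgdef]
      refine integrable_finset_sum _ fun i _ => integrable_finset_sum _ fun j _ => ?_
      have h0 := ((hindInt i).mul_prod (hindInt j)).const_mul (q n₀ (cpt i, cpt j))
      simpa [mul_assoc] using h0
    have h2 : ∫ z, |q n₀ z - g z| ∂(ν.prod ν) ≤ ε' * m := by
      have h3 : ∫ z, |q n₀ z - g z| ∂(ν.prod ν) ≤ ∫ _, ε' ∂(ν.prod ν) := by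
        refine integral_mono_ae (hq'Int.sub hgInt).abs (integrable_const _) ?_
        filter_upwards [hPae] with z hz
        exact hgval z hz
      rw [integral_const] at h3
      have hPuniv : (ν.prod ν) Set.univ = ν Set.univ * ν Set.univ := by
        rw [← Set.univ_prod_univ, Measure.prod_prod]
      rw [measureReal_def, hPuniv, ENNReal.toReal_mul, smul_eq_mul] at h3
      calc ∫ z, |q n₀ z - g z| ∂(ν.prod ν) ≤ (ν Set.univ).toReal * (ν Set.univ).toReal * ε' := h3
        _ = ε' * m := by rw [hm]; ring
    refine ⟨N, (fun i j => q n₀ (cpt i, cpt j)), As, hAmeas, ?_⟩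
    have htri : ∫ z, |k z.1 z.2 - g z| ∂(ν.prod ν)
        ≤ (∫ z, |k z.1 z.2 - q n₀ z| ∂(ν.prod ν)) + ∫ z, |q n₀ z - g z| ∂(ν.prod ν) := by
      have hI1 : Integrable (fun z => |k z.1 z.2 - q n₀ z|) (ν.prod ν) := (hint.sub hq'Int).abs
      have hI2 : Integrable (fun z => |q n₀ z - g z|) (ν.prod ν) := (hq'Int.sub hgInt).abs
      have hI3 : Integrable (fun z => |k z.1 z.2 - g z|) (ν.prod ν) := (hint.sub hgInt).abs
      rw [← integral_add hI1 hI2]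
      exact integral_mono_ae hI3 (hI1.add hI2) (Eventually.of_forall fun z => abs_sub_le _ _ _)
    have hfinal : ∫ z, |k z.1 z.2 - g z| ∂(ν.prod ν) < ε := by
      have h7 : ε' * m < ε / 2 := by
        have h8 : ε' * (m + 1) = ε / 2 := by
          rw [hε'def]
          field_simp
        nlinarith [hε'0]
      calc ∫ z, |k z.1 z.2 - g z| ∂(ν.prod ν)
          ≤ (∫ z, |k z.1 z.2 - q n₀ z| ∂(ν.prod ν)) + ∫ z, |q n₀ z - g z| ∂(ν.prod ν) := htri
        _ < ε/2 + ε' * m := by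
            have := h2
            linarith [hn₀]
        _ < ε/2 + ε/2 := by linarith
        _ = ε := by ring
    exact hfinal
  obtain ⟨ρstar, hadm, hmax⟩ := exists_max_aux ν hν0 (fun z => k z.1 z.2) hint happrox ρp ρm
    hρm (by rwa [hνuniv]) (by rwa [hνuniv])
  have henergy : ∀ ρ : EuclideanSpace ℝ (Fin p) → ℝ, AEStronglyMeasurable ρ ν →
      (∀ᵐ x ∂ν, ρm ≤ ρ x ∧ ρ x ≤ ρp) →
      energy (μH[d]) Ω k ρ
        = (1/2) * ∫ z, k z.1 z.2 * ρ z.1 * ρ z.2 ∂(ν.prod ν) := by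
    intro ρ hm hb
    have habs : ∀ᵐ x ∂ν, |ρ x| ≤ ρp := by
      filter_upwards [hb] with x hx
      exact abs_le.2 ⟨by linarith [hρm, hx.1], hx.2⟩
    have hI : Integrable (Function.uncurry fun x y => k x y * ρ x * ρ y) (ν.prod ν) :=
      integrable_kernel_mul hint hm hm habs habs
    rw [energy]
    congr 1
    rw [hν] at hI ⊢
    exact integral_integral hI
  refine ⟨ρstar, hadm, fun ρ hρ => ?_⟩
  obtain ⟨h1, h2, h3⟩ := hρ
  rw [henergy ρ h1 h3, henergy ρstar hadm.1 hadm.2.2]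
  have hle := hmax ρ ⟨h1, h2, h3⟩
  linarith

end
end

section
/- Suppose E[σ] > 0 for every σ ∈ L^∞(Ω) that is not zero almost everywhere. If ρ* ∈ A(Ω, ρ_+, ρ_−) is a local maximizer of E on A(Ω, ρ_+, ρ_−) (i.e., there exists ε > 0 such that E[ρ*] ≥ E[ρ] for every ρ ∈ A(Ω, ρ_+, ρ_−) with ‖ρ − ρ*‖_{L^∞(Ω)} ≤ ε), then ρ*(x) ∈ {ρ_−, ρ_+} for almost every x ∈ Ω. -/
noncomputable section

open MeasureTheory Metric Set Filter
open scoped ENNReal NNReal Topology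

/-- `E` is positive definite: `E[σ] > 0` for every `σ ∈ L^∞(Ω)` not zero a.e. -/
def EnergyPosDef {α : Type} [MeasurableSpace α] (μ : Measure α) (Ω : Set α)
    (k : α → α → ℝ) : Prop :=
  ∀ σ : α → ℝ, AEStronglyMeasurable σ (μ.restrict Ω) →
    (∃ C : ℝ, ∀ᵐ x ∂(μ.restrict Ω), |σ x| ≤ C) →
    ¬ (σ =ᵐ[μ.restrict Ω] (fun _ => (0:ℝ))) → 0 < energy μ Ω k σ

/-- coordinates are bounded by the norm in Euclidean space -/
lemma my_abs_coord_le_norm {p : ℕ} (x : EuclideanSpace ℝ (Fin p)) (i : Fin p) :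
    |x i| ≤ ‖x‖ := by
  rw [EuclideanSpace.norm_eq]
  rw [show |x i| = Real.sqrt (|x i| ^ 2) from (Real.sqrt_sq (abs_nonneg _)).symm]
  apply Real.sqrt_le_sqrt
  simp only [Real.norm_eq_abs]
  exact Finset.single_le_sum (f := fun j => |x j| ^ 2) (fun j _ => sq_nonneg _)
    (Finset.mem_univ i)

/-- The general bang-bang lemma, for an abstract measure. -/
lemma my_bangbang {α : Type} [MeasurableSpace α] (μ : Measure α) (Ω : Set α)
    [IsFiniteMeasure (μ.restrict Ω)]
    (k : α → α → ℝ)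
    (hint : Integrable (fun z : α × α => k z.1 z.2)
      ((μ.restrict Ω).prod (μ.restrict Ω)))
    (hpos : EnergyPosDef μ Ω k)
    (hsplit : ∀ S : Set α, MeasurableSet S → μ.restrict Ω S ≠ 0 →
      ∃ σ : α → ℝ, Measurable σ ∧ (∀ x, x ∉ S → σ x = 0) ∧
        (∃ M : ℝ, 0 < M ∧ ∀ x, |σ x| ≤ M) ∧
        (∫ x in Ω, σ x ∂μ) = 0 ∧ ¬ (σ =ᵐ[μ.restrict Ω] fun _ => (0:ℝ)))
    (ρp ρm : ℝ) (hρm : 0 < ρm) (hmp : ρm ≤ ρp)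
    (ρstar : α → ℝ) (hadm : IsAdmissible μ Ω ρp ρm ρstar)
    (hloc : ∃ ε > (0:ℝ), ∀ ρ, IsAdmissible μ Ω ρp ρm ρ →
      (∀ᵐ x ∂(μ.restrict Ω), |ρ x - ρstar x| ≤ ε) →
      energy μ Ω k ρ ≤ energy μ Ω k ρstar) :
    ∀ᵐ x ∂(μ.restrict Ω), ρstar x = ρm ∨ ρstar x = ρp := by
  classical
  obtain ⟨hρmeas, hρint, hρbd⟩ := hadm
  obtain ⟨ε, hε, hmax⟩ := hloc
  -- a measurable, everywhere-bounded representative of ρstar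
  set g : α → ℝ := fun x => max ρm (min ρp (hρmeas.mk ρstar x)) with hgdef
  have hgmeas : Measurable g :=
    measurable_const.max (measurable_const.min hρmeas.stronglyMeasurable_mk.measurable)
  have hgm : ∀ x, ρm ≤ g x := fun x => le_max_left _ _
  have hgp : ∀ x, g x ≤ ρp := fun x => max_le hmp (min_le_left _ _)
  have heq' : ρstar =ᵐ[μ.restrict Ω] g := by
    filter_upwards [hρmeas.ae_eq_mk, hρbd] with x h1 h2
    rw [hgdef]; simp only
    rw [← h1, min_eq_right h2.2, max_eq_right h2.1]
  suffices hS' : μ.restrict Ω {x | ρm < g x ∧ g x < ρp} = 0 by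
    have h1 : ∀ᵐ x ∂μ.restrict Ω, x ∉ {x | ρm < g x ∧ g x < ρp} :=
      measure_eq_zero_iff_ae_notMem.1 hS'
    filter_upwards [h1, heq', hρbd] with x hx h2 h3
    simp only [mem_setOf_eq, not_and_or, not_lt] at hx
    rcases hx with hx | hx
    · left; rw [h2]; exact le_antisymm hx (h2 ▸ h3.1)
    · right; rw [h2]; exact le_antisymm (h2 ▸ h3.2) hx
  by_contra h0
  -- find a positive-measure set where g is δ-away from both bounds
  have hδex : ∃ n : ℕ,
      μ.restrict Ω (g ⁻¹' Icc (ρm + 1/(n+1)) (ρp - 1/(n+1))) ≠ 0 := by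
    by_contra hall; push_neg at hall
    apply h0
    refine measure_mono_null ?_ (measure_iUnion_null fun n : ℕ => hall n)
    intro x hx
    have hpos' : (0:ℝ) < min (g x - ρm) (ρp - g x) :=
      lt_min (sub_pos.2 hx.1) (sub_pos.2 hx.2)
    obtain ⟨n, hn⟩ := exists_nat_one_div_lt hpos'
    have hn1 := lt_min_iff.1 hn
    refine mem_iUnion.2 ⟨n, ?_⟩
    simp only [mem_preimage, mem_Icc]
    constructor <;> [linarith [hn1.1]; linarith [hn1.2]]
  obtain ⟨n, hδ0⟩ := hδex
  set δ : ℝ := 1/(n+1) with hδdef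
  have hδpos : 0 < δ := by positivity
  set S : Set α := g ⁻¹' Icc (ρm + δ) (ρp - δ) with hSdef
  have hSm : MeasurableSet S := hgmeas measurableSet_Icc
  obtain ⟨σ, hσmeas, hσsupp, ⟨M, hM0, hσbd⟩, hσ0, hσne⟩ := hsplit S hSm hδ0
  -- integrability
  have hρppos : 0 < ρp := lt_of_lt_of_le hρm hmp
  have hgb : ∀ x, |g x| ≤ ρp := fun x => by
    rw [abs_of_pos (lt_of_lt_of_le hρm (hgm x))]; exact hgp x
  have hgint : Integrable g (μ.restrict Ω) :=
    Integrable.mono' (integrable_const ρp) hgmeas.aestronglyMeasurable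
      (ae_of_all _ fun x => by rw [Real.norm_eq_abs]; exact hgb x)
  have hσint : Integrable σ (μ.restrict Ω) :=
    Integrable.mono' (integrable_const M) hσmeas.aestronglyMeasurable
      (ae_of_all _ fun x => by rw [Real.norm_eq_abs]; exact hσbd x)
  have hgint1 : ∫ x, g x ∂(μ.restrict Ω) = 1 := by
    rw [← integral_congr_ae heq']; exact hρint
  -- the product-integral machinery
  have hIJ : ∀ (ρ η : α → ℝ), Measurable ρ → Measurable η → ∀ Cρ Cη : ℝ,
      (∀ x, |ρ x| ≤ Cρ) → (∀ x, |η x| ≤ Cη) →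
      Integrable (fun z : α × α => k z.1 z.2 * ρ z.1 * η z.2)
        ((μ.restrict Ω).prod (μ.restrict Ω)) := by
    intro ρ η hρ hη Cρ Cη hCρ hCη
    have heqf : (fun z : α × α => k z.1 z.2 * ρ z.1 * η z.2)
        = fun z => (ρ z.1 * η z.2) * k z.1 z.2 := by funext z; ring
    rw [heqf]
    refine hint.bdd_mul (c := Cρ * Cη) ?_ (ae_of_all _ fun z => ?_)
    · exact ((hρ.comp measurable_fst).mul (hη.comp measurable_snd)).aestronglyMeasurable
    · rw [Real.norm_eq_abs, abs_mul]
      exact mul_le_mul (hCρ _) (hCη _) (abs_nonneg _)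
        (le_trans (abs_nonneg (ρ z.1)) (hCρ z.1))
  have hEJ : ∀ (ρ : α → ℝ) (C : ℝ), Measurable ρ → (∀ x, |ρ x| ≤ C) →
      energy μ Ω k ρ = (1/2 : ℝ) *
        ∫ z, k z.1 z.2 * ρ z.1 * ρ z.2 ∂((μ.restrict Ω).prod (μ.restrict Ω)) := by
    intro ρ C hρme hρb
    unfold energy
    congr 1
    exact integral_integral (f := fun x y => k x y * ρ x * ρ y) (hIJ ρ ρ hρme hρme C C hρb hρb)
  have Igg := hIJ g g hgmeas hgmeas ρp ρp hgb hgb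
  have Iσg := hIJ σ g hσmeas hgmeas M ρp hσbd hgb
  have Igσ := hIJ g σ hgmeas hσmeas ρp M hgb hσbd
  have Iσσ := hIJ σ σ hσmeas hσmeas M M hσbd hσbd
  set Jσg : ℝ := ∫ z, k z.1 z.2 * σ z.1 * g z.2 ∂((μ.restrict Ω).prod (μ.restrict Ω)) with hJσg
  set Jgσ : ℝ := ∫ z, k z.1 z.2 * g z.1 * σ z.2 ∂((μ.restrict Ω).prod (μ.restrict Ω)) with hJgσ
  set L : ℝ := (1/2 : ℝ) * (Jσg + Jgσ) with hLdef
  have hEσpos : 0 < energy μ Ω k σ :=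
    hpos σ hσmeas.aestronglyMeasurable ⟨M, ae_of_all _ hσbd⟩ hσne
  set Eσ : ℝ := energy μ Ω k σ with hEσdef
  -- the quadratic expansion
  have hkey : ∀ t : ℝ, energy μ Ω k (fun x => g x + t * σ x)
      = energy μ Ω k g + t * L + t^2 * Eσ := by
    intro t
    have hb : ∀ x, |g x + t * σ x| ≤ ρp + |t| * M := fun x => by
      have h1 := abs_add_le (g x) (t * σ x)
      have h2 : |t * σ x| ≤ |t| * M := by
        rw [abs_mul]
        exact mul_le_mul_of_nonneg_left (hσbd x) (abs_nonneg t)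
      have := hgb x; linarith
    have hmeas_t : Measurable fun x => g x + t * σ x :=
      hgmeas.add (hσmeas.const_mul t)
    rw [hEJ _ _ hmeas_t hb, hEJ g ρp hgmeas hgb, hEσdef, hEJ σ M hσmeas hσbd]
    have hsplitfun : (fun z : α × α =>
          k z.1 z.2 * (g z.1 + t * σ z.1) * (g z.2 + t * σ z.2))
        = fun z => (k z.1 z.2 * g z.1 * g z.2) +
            ((t * (k z.1 z.2 * σ z.1 * g z.2)) +
            ((t * (k z.1 z.2 * g z.1 * σ z.2)) +
            ((t*t) * (k z.1 z.2 * σ z.1 * σ z.2)))) := by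
      funext z; ring
    have I2 : Integrable (fun z : α × α => t * (k z.1 z.2 * σ z.1 * g z.2))
        ((μ.restrict Ω).prod (μ.restrict Ω)) := Iσg.const_mul t
    have I3 : Integrable (fun z : α × α => t * (k z.1 z.2 * g z.1 * σ z.2))
        ((μ.restrict Ω).prod (μ.restrict Ω)) := Igσ.const_mul t
    have I4 : Integrable (fun z : α × α => (t*t) * (k z.1 z.2 * σ z.1 * σ z.2))
        ((μ.restrict Ω).prod (μ.restrict Ω)) := Iσσ.const_mul (t*t)
    have I34 : Integrable (fun z : α × α => t * (k z.1 z.2 * g z.1 * σ z.2)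
        + (t*t) * (k z.1 z.2 * σ z.1 * σ z.2))
        ((μ.restrict Ω).prod (μ.restrict Ω)) := I3.add I4
    have I234 : Integrable (fun z : α × α => t * (k z.1 z.2 * σ z.1 * g z.2)
        + (t * (k z.1 z.2 * g z.1 * σ z.2) + (t*t) * (k z.1 z.2 * σ z.1 * σ z.2)))
        ((μ.restrict Ω).prod (μ.restrict Ω)) := I2.add I34
    rw [hsplitfun]
    rw [integral_add Igg I234, integral_add I2 I34, integral_add I3 I4,
      integral_const_mul, integral_const_mul, integral_const_mul]
    rw [hLdef, ← hJσg, ← hJgσ]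
    ring
  -- the perturbation size
  set t₀ : ℝ := min δ ε / M with ht₀def
  have ht₀pos : 0 < t₀ := div_pos (lt_min hδpos hε) hM0
  have ht₀M : t₀ * M = min δ ε := div_mul_cancel₀ _ (ne_of_gt hM0)
  have htσ : ∀ t : ℝ, |t| ≤ t₀ → ∀ x, |t * σ x| ≤ min δ ε := by
    intro t ht x
    rw [abs_mul, ← ht₀M]
    exact mul_le_mul ht (hσbd x) (abs_nonneg _) (le_of_lt ht₀pos)
  have hadm_t : ∀ t : ℝ, |t| ≤ t₀ →
      IsAdmissible μ Ω ρp ρm (fun x => g x + t * σ x) := by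
    intro t ht
    refine ⟨(hgmeas.add (hσmeas.const_mul t)).aestronglyMeasurable, ?_, ?_⟩
    · rw [integral_add hgint (hσint.const_mul t), hgint1, integral_const_mul, hσ0,
        mul_zero, add_zero]
    · refine ae_of_all _ fun x => ?_
      show ρm ≤ g x + t * σ x ∧ g x + t * σ x ≤ ρp
      by_cases hxS : x ∈ S
      · have h1 : ρm + δ ≤ g x ∧ g x ≤ ρp - δ := by
          simpa [hSdef, mem_preimage, mem_Icc] using hxS
        have h2 : |t * σ x| ≤ δ := le_trans (htσ t ht x) (min_le_left _ _)
        have h3 := abs_le.1 h2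
        constructor <;> [linarith [h1.1, h3.1]; linarith [h1.2, h3.2]]
      · rw [hσsupp x hxS, mul_zero, add_zero]
        exact ⟨hgm x, hgp x⟩
  have hclose : ∀ t : ℝ, |t| ≤ t₀ →
      ∀ᵐ x ∂(μ.restrict Ω), |(g x + t * σ x) - ρstar x| ≤ ε := by
    intro t ht
    filter_upwards [heq'] with x hx
    rw [hx, show g x + t * σ x - g x = t * σ x from by ring]
    exact le_trans (htσ t ht x) (min_le_right _ _)
  have hEgstar : energy μ Ω k ρstar = energy μ Ω k g := by
    unfold energy
    congr 1
    refine integral_congr_ae ?_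
    filter_upwards [heq'] with x hx
    refine integral_congr_ae ?_
    filter_upwards [heq'] with y hy
    rw [hx, hy]
  have habs1 : |t₀| ≤ t₀ := by rw [abs_of_pos ht₀pos]
  have habs2 : |(-t₀)| ≤ t₀ := by rw [abs_neg, abs_of_pos ht₀pos]
  have h1 := hmax _ (hadm_t t₀ habs1) (hclose t₀ habs1)
  have h2 := hmax _ (hadm_t (-t₀) habs2) (hclose (-t₀) habs2)
  rw [hEgstar, hkey t₀] at h1
  rw [hEgstar, hkey (-t₀)] at h2
  nlinarith [mul_pos (mul_pos ht₀pos ht₀pos) hEσpos, sq_nonneg t₀]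

/-- bang-bang property.  A local maximizer of `E` on `A(Ω, ρ₊, ρ₋)`
takes only the values `ρ₋` and `ρ₊` almost everywhere. -/
theorem stmt_4 {p : ℕ} (d : ℕ) (hd : 0 < d) (hdp : d ≤ p)
    (Ω : Set (EuclideanSpace ℝ (Fin p))) (hΩcomp : IsCompact Ω) (hΩinf : Ω.Infinite)
    (hΩpos : μH[d] Ω ≠ 0) (hΩfin : μH[d] Ω ≠ ⊤)
    (f : ℝ → ℝ) (k : EuclideanSpace ℝ (Fin p) → EuclideanSpace ℝ (Fin p) → ℝ)
    (hkf : ∀ x ∈ Ω, ∀ y ∈ Ω, k x y = f (dist x y))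
    (hkpos : ∀ x ∈ Ω, ∀ y ∈ Ω, 0 < k x y)
    (hint : Integrable
      (fun z : EuclideanSpace ℝ (Fin p) × EuclideanSpace ℝ (Fin p) => k z.1 z.2)
      (((μH[d]).restrict Ω).prod ((μH[d]).restrict Ω)))
    (hpos : EnergyPosDef (μH[d]) Ω k)
    (ρp ρm : ℝ) (hρm : 0 < ρm) (hρm' : ρm ≤ ((μH[d]) Ω).toReal⁻¹)
    (hρp : ((μH[d]) Ω).toReal⁻¹ ≤ ρp)
    (ρstar : EuclideanSpace ℝ (Fin p) → ℝ)
    (hadm : IsAdmissible (μH[d]) Ω ρp ρm ρstar)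
    (hloc : ∃ ε > (0:ℝ), ∀ ρ, IsAdmissible (μH[d]) Ω ρp ρm ρ →
      (∀ᵐ x ∂((μH[d]).restrict Ω), |ρ x - ρstar x| ≤ ε) →
      energy (μH[d]) Ω k ρ ≤ energy (μH[d]) Ω k ρstar) :
    ∀ᵐ x ∂((μH[d]).restrict Ω), ρstar x = ρm ∨ ρstar x = ρp := by
  classical
  haveI hfin : IsFiniteMeasure ((μH[d]).restrict Ω) :=
    ⟨by rw [Measure.restrict_apply_univ]; exact lt_top_iff_ne_top.2 hΩfin⟩
  haveI hna : NoAtoms (μH[d] : Measure (EuclideanSpace ℝ (Fin p))) :=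
    Measure.noAtoms_hausdorff _ (by exact_mod_cast hd)
  have hΩm : MeasurableSet Ω := hΩcomp.isClosed.measurableSet
  have hmp : ρm ≤ ρp := le_trans hρm' hρp
  refine my_bangbang (μH[d]) Ω k hint hpos ?_ ρp ρm hρm hmp ρstar hadm hloc
  -- the splitting property, from nonatomicity and boundedness of Ω
  intro S hSm hS0
  obtain ⟨R, hR⟩ := hΩcomp.isBounded.subset_closedBall 0
  set R' : ℝ := max R 0 with hR'def
  have hR'0 : 0 ≤ R' := le_max_right _ _
  have hRx : ∀ x ∈ Ω, ‖x‖ ≤ R' := fun x hx =>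
    le_trans (mem_closedBall_zero_iff.1 (hR hx)) (le_max_left _ _)
  have hcoord : ∀ i : Fin p,
      Measurable fun x : EuclideanSpace ℝ (Fin p) => x i := by
    intro i
    exact (EuclideanSpace.proj (𝕜 := ℝ) i).continuous.measurable
  set ψ : Fin p → EuclideanSpace ℝ (Fin p) → ℝ :=
    fun i x => max (-R') (min R' (x i)) with hψdef
  have hψmeas : ∀ i, Measurable (ψ i) := fun i =>
    measurable_const.max (measurable_const.min (hcoord i))
  have hψb : ∀ i x, |ψ i x| ≤ R' := by
    intro i x
    rw [abs_le]
    exact ⟨le_max_left _ _, max_le (by linarith) (min_le_left _ _)⟩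
  have hψΩ : ∀ i, ∀ x ∈ Ω, ψ i x = x i := by
    intro i x hx
    have h1 : |x i| ≤ R' := le_trans (my_abs_coord_le_norm x i) (hRx x hx)
    have h2 := abs_le.1 h1
    rw [hψdef]; simp only
    rw [min_eq_right h2.2, max_eq_right h2.1]
  set m : ℝ := (((μH[d]).restrict Ω) S).toReal with hmdef
  have hm0 : 0 < m := ENNReal.toReal_pos hS0 (measure_ne_top _ _)
  have hψint : ∀ i, Integrable (ψ i) (((μH[d]).restrict Ω).restrict S) :=
    fun i => Integrable.mono' (integrable_const R') (hψmeas i).aestronglyMeasurable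
      (ae_of_all _ fun x => by rw [Real.norm_eq_abs]; exact hψb i x)
  set cc : Fin p → ℝ := fun i => (∫ x in S, ψ i x ∂((μH[d]).restrict Ω)) / m with hccdef
  set σf : Fin p → EuclideanSpace ℝ (Fin p) → ℝ :=
    fun i => S.indicator (fun x => ψ i x - cc i) with hσfdef
  have hσfmeas : ∀ i, Measurable (σf i) := fun i =>
    ((hψmeas i).sub measurable_const).indicator hSm
  have hσfsupp : ∀ i, ∀ x, x ∉ S → σf i x = 0 := fun i x hx =>
    indicator_of_notMem hx _
  have hσfb : ∀ i x, |σf i x| ≤ R' + |cc i| + 1 := by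
    intro i x
    rw [hσfdef]; simp only
    by_cases hxS : x ∈ S
    · rw [indicator_of_mem hxS]
      calc |ψ i x - cc i| = |ψ i x + -(cc i)| := by rw [sub_eq_add_neg]
        _ ≤ |ψ i x| + |-(cc i)| := abs_add_le _ _
        _ = |ψ i x| + |cc i| := by rw [abs_neg]
        _ ≤ R' + |cc i| + 1 := by linarith [hψb i x]
    · rw [indicator_of_notMem hxS, abs_zero]; positivity
  have hσfint0 : ∀ i, ∫ x in Ω, σf i x ∂(μH[d]) = 0 := by
    intro i
    have h1 : ∫ x in Ω, σf i x ∂(μH[d])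
        = ∫ x in S, (ψ i x - cc i) ∂((μH[d]).restrict Ω) := by
      rw [hσfdef]
      exact integral_indicator hSm
    rw [h1, integral_sub (hψint i) (integrable_const _), setIntegral_const,
      smul_eq_mul, measureReal_def, ← hmdef, hccdef]
    simp only
    rw [mul_comm, div_mul_cancel₀ _ (ne_of_gt hm0), sub_self]
  -- one of the σf i is not a.e. zero
  have hex : ∃ i, ¬ (σf i =ᵐ[(μH[d]).restrict Ω] fun _ => (0:ℝ)) := by
    by_contra hall; push_neg at hall
    apply hS0
    have h1 : ∀ᵐ x ∂((μH[d]).restrict Ω), ∀ i, σf i x = 0 := ae_all_iff.2 hall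
    have h2 : ∀ᵐ x ∂((μH[d]).restrict Ω), x ∈ Ω := ae_restrict_mem hΩm
    set T : Set (EuclideanSpace ℝ (Fin p)) := {y | ∀ j, y j = cc j} with hTdef
    have hTsub : T.Subsingleton := by
      intro x hx y hy
      ext j
      rw [hx j, hy j]
    have hle : ((μH[d]).restrict Ω) S ≤ ((μH[d]).restrict Ω) T := by
      refine measure_mono_ae ?_
      filter_upwards [h1, h2] with x hx hxΩ
      intro hxS j
      have h3 := hx j
      rw [hσfdef] at h3; simp only at h3
      rw [indicator_of_mem hxS] at h3
      have h4 : ψ j x = cc j := by linarith [sub_eq_zero.1 h3]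
      rw [← hψΩ j x hxΩ]; exact h4
    have hT0 : ((μH[d]).restrict Ω) T = 0 := by
      haveI : NullSingletonClass (μH[d] : Measure (EuclideanSpace ℝ (Fin p))) := hna
      exact hTsub.measure_zero _
    exact le_antisymm (hle.trans hT0.le) zero_le
  obtain ⟨i, hi⟩ := hex
  exact ⟨σf i, hσfmeas i, hσfsupp i, ⟨R' + |cc i| + 1, by positivity, hσfb i⟩,
    hσfint0 i, hi⟩

end
end

section
/- Suppose E[σ] > 0 for every σ ∈ L^∞(Ω) that is not zero almost everywhere. Let ρ ∈ A(Ω, ρ_+, ρ_−), set φ := Kρ, let α ∈ ℝ be such that |{x ∈ Ω : φ(x) ≥ α}|_d = ((|Ω|_d^{−1} − ρ_−)/(ρ_+ − ρ_−)) |Ω|_d and assume |{x ∈ Ω : φ(x) = α}|_d = 0, and define ρ'(x) := ρ_+ if φ(x) ≥ α and ρ'(x) := ρ_− if φ(x) < α. Then ρ' ∈ A(Ω, ρ_+, ρ_−), and if ρ' ≠ ρ (as elements of L^∞(Ω)) then E[ρ'] > E[ρ]. -/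
noncomputable section
open MeasureTheory Metric Set Filter
open scoped ENNReal NNReal Topology

/-- The integral operator `(Kρ)(x) = ∫_Ω k(x,y) ρ(y) dy`. -/
def Kop {α : Type} [MeasurableSpace α] (μ : Measure α) (Ω : Set α)
    (k : α → α → ℝ) (ρ : α → ℝ) (x : α) : ℝ :=
  ∫ y in Ω, k x y * ρ y ∂μ


section Aux

variable {X : Type} [MeasurableSpace X] {ν : Measure X}

lemma aux_int [SFinite ν] {K : X × X → ℝ} (hK : Integrable K (ν.prod ν))
    {g h : X → ℝ} (hg : AEStronglyMeasurable g ν) (hh : AEStronglyMeasurable h ν)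
    {Cg Ch : ℝ} (hgb : ∀ᵐ x ∂ν, ‖g x‖ ≤ Cg) (hhb : ∀ᵐ x ∂ν, ‖h x‖ ≤ Ch) :
    Integrable (fun z : X × X => K z * g z.1 * h z.2) (ν.prod ν) := by
  have hg' : AEStronglyMeasurable (fun z : X × X => g z.1) (ν.prod ν) :=
    hg.comp_quasiMeasurePreserving Measure.quasiMeasurePreserving_fst
  have hh' : AEStronglyMeasurable (fun z : X × X => h z.2) (ν.prod ν) :=
    hh.comp_quasiMeasurePreserving Measure.quasiMeasurePreserving_snd
  have hgb' : ∀ᵐ z ∂ν.prod ν, ‖g z.1‖ ≤ Cg :=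
    Measure.quasiMeasurePreserving_fst.ae hgb
  have hhb' : ∀ᵐ z ∂ν.prod ν, ‖h z.2‖ ≤ Ch :=
    Measure.quasiMeasurePreserving_snd.ae hhb
  have h1 : Integrable (fun z : X × X => g z.1 * K z) (ν.prod ν) := hK.bdd_mul hg' hgb'
  have h2 : Integrable (fun z : X × X => h z.2 * (g z.1 * K z)) (ν.prod ν) :=
    h1.bdd_mul hh' hhb'
  exact h2.congr (Filter.EventuallyEq.of_eq (by funext z; ring))

lemma energy_step [IsFiniteMeasure ν]
    {K : X × X → ℝ} (hK : Integrable K (ν.prod ν))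
    (hsymm : ∀ᵐ z : X × X ∂ν.prod ν, K z = K z.swap)
    {ρ σ : X → ℝ} (hρ : AEStronglyMeasurable ρ ν) (hσ : AEStronglyMeasurable σ ν)
    {Cρ Cσ : ℝ} (hρb : ∀ᵐ x ∂ν, ‖ρ x‖ ≤ Cρ) (hσb : ∀ᵐ x ∂ν, ‖σ x‖ ≤ Cσ) :
    ∫ x, (∫ y, K (x, y) * (ρ x + σ x) * (ρ y + σ y) ∂ν) ∂ν
      = (∫ x, (∫ y, K (x, y) * ρ x * ρ y ∂ν) ∂ν)
        + 2 * (∫ x, σ x * (∫ y, K (x, y) * ρ y ∂ν) ∂ν)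
        + (∫ x, (∫ y, K (x, y) * σ x * σ y ∂ν) ∂ν) := by
  have hsum : AEStronglyMeasurable (fun x => ρ x + σ x) ν := hρ.add hσ
  have hsumb : ∀ᵐ x ∂ν, ‖ρ x + σ x‖ ≤ Cρ + Cσ := by
    filter_upwards [hρb, hσb] with x h1 h2
    exact (norm_add_le _ _).trans (add_le_add h1 h2)
  have iρρ := aux_int hK hρ hρ hρb hρb
  have iσρ := aux_int hK hσ hρ hσb hρb
  have iρσ := aux_int hK hρ hσ hρb hσb
  have iσσ := aux_int hK hσ hσ hσb hσb
  have iss := aux_int hK hsum hsum hsumb hsumb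
  -- iterated to product
  have conv : ∀ (g h : X → ℝ), Integrable (fun z : X × X => K z * g z.1 * h z.2) (ν.prod ν) →
      ∫ x, (∫ y, K (x, y) * g x * h y ∂ν) ∂ν
        = ∫ z, K z * g z.1 * h z.2 ∂(ν.prod ν) := by
    intro g h hi
    exact integral_integral (f := fun x y => K (x, y) * g x * h y) hi
  have hL := conv (fun x => ρ x + σ x) (fun x => ρ x + σ x) (by simpa using iss)
  have hρρ := conv _ _ iρρ
  have hσρ := conv _ _ iσρ
  have hρσ := conv _ _ iρσ
  have hσσ := conv _ _ iσσ
  -- expand product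
  have hexp : ∫ z, K z * (ρ z.1 + σ z.1) * (ρ z.2 + σ z.2) ∂(ν.prod ν)
      = (∫ z, K z * ρ z.1 * ρ z.2 ∂(ν.prod ν)) + (∫ z, K z * σ z.1 * ρ z.2 ∂(ν.prod ν))
        + (∫ z, K z * ρ z.1 * σ z.2 ∂(ν.prod ν)) + (∫ z, K z * σ z.1 * σ z.2 ∂(ν.prod ν)) := by
    have heq : (fun z : X × X => K z * (ρ z.1 + σ z.1) * (ρ z.2 + σ z.2))
        = (fun z : X × X => (K z * ρ z.1 * ρ z.2 + K z * σ z.1 * ρ z.2)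
            + (K z * ρ z.1 * σ z.2 + K z * σ z.1 * σ z.2)) := by
      funext z; ring
    have i12 : Integrable (fun z : X × X => K z * ρ z.1 * ρ z.2 + K z * σ z.1 * ρ z.2)
        (ν.prod ν) := iρρ.add iσρ
    have i34 : Integrable (fun z : X × X => K z * ρ z.1 * σ z.2 + K z * σ z.1 * σ z.2)
        (ν.prod ν) := iρσ.add iσσ
    rw [heq, integral_add i12 i34, integral_add iρρ iσρ, integral_add iρσ iσσ]
    ring
  -- symmetry: K ρ σ = K σ ρ
  have hswap : ∫ z, K z * ρ z.1 * σ z.2 ∂(ν.prod ν) = ∫ z, K z * σ z.1 * ρ z.2 ∂(ν.prod ν) := by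
    have h1 : ∫ z, K z * ρ z.1 * σ z.2 ∂(ν.prod ν)
        = ∫ z, (fun w : X × X => K w * σ w.1 * ρ w.2) z.swap ∂(ν.prod ν) := by
      refine integral_congr_ae ?_
      filter_upwards [hsymm] with z hz
      simp only [Prod.fst_swap, Prod.snd_swap]
      rw [hz]; ring
    rw [h1]
    exact integral_prod_swap (fun w : X × X => K w * σ w.1 * ρ w.2)
  -- σρ term is σ * Kρ
  have hKρ : ∫ x, σ x * (∫ y, K (x, y) * ρ y ∂ν) ∂ν
      = ∫ x, (∫ y, K (x, y) * σ x * ρ y ∂ν) ∂ν := by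
    refine integral_congr_ae (Filter.EventuallyEq.of_eq ?_)
    funext x
    rw [← integral_const_mul]
    congr 1; funext y; ring
  rw [hKρ, hσρ, hL, hρρ, hσσ, hexp, hswap]
  ring

end Aux

/-- one step of the rearrangement algorithm.  If `φ = Kρ`, `α` is a
threshold with `|{φ ≥ α}|_d = ((|Ω|_d⁻¹ − ρ₋)/(ρ₊ − ρ₋))|Ω|_d` and `|{φ = α}|_d = 0`,
then the thresholded update `ρ'` is admissible, and if `ρ' ≠ ρ` in `L^∞(Ω)` then the
energy strictly increases. -/
theorem stmt_18 {p : ℕ} (d : ℕ) (hd : 0 < d) (hdp : d ≤ p)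
    (Ω : Set (EuclideanSpace ℝ (Fin p))) (hΩcomp : IsCompact Ω) (hΩinf : Ω.Infinite)
    (hΩpos : μH[d] Ω ≠ 0) (hΩfin : μH[d] Ω ≠ ⊤)
    (f : ℝ → ℝ) (k : EuclideanSpace ℝ (Fin p) → EuclideanSpace ℝ (Fin p) → ℝ)
    (hkf : ∀ x ∈ Ω, ∀ y ∈ Ω, k x y = f (dist x y))
    (hkpos : ∀ x ∈ Ω, ∀ y ∈ Ω, 0 < k x y)
    (hint : Integrable
      (fun z : EuclideanSpace ℝ (Fin p) × EuclideanSpace ℝ (Fin p) => k z.1 z.2)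
      (((μH[d]).restrict Ω).prod ((μH[d]).restrict Ω)))
    (hpos : EnergyPosDef (μH[d]) Ω k)
    (ρp ρm : ℝ) (hρm : 0 < ρm) (hρm' : ρm ≤ ((μH[d]) Ω).toReal⁻¹)
    (hρp : ((μH[d]) Ω).toReal⁻¹ ≤ ρp)
    (ρ : EuclideanSpace ℝ (Fin p) → ℝ)
    (hadm : IsAdmissible (μH[d]) Ω ρp ρm ρ)
    (α : ℝ)
    (hα : (((μH[d]).restrict Ω) {x | α ≤ Kop (μH[d]) Ω k ρ x}).toReal =
      ((((μH[d]) Ω).toReal⁻¹ - ρm) / (ρp - ρm)) * ((μH[d]) Ω).toReal)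
    (hα0 : ((μH[d]).restrict Ω) {x | Kop (μH[d]) Ω k ρ x = α} = 0) :
    IsAdmissible (μH[d]) Ω ρp ρm
      (fun x => if α ≤ Kop (μH[d]) Ω k ρ x then ρp else ρm) ∧
    (¬ ((fun x => if α ≤ Kop (μH[d]) Ω k ρ x then ρp else ρm)
        =ᵐ[(μH[d]).restrict Ω] ρ) →
      energy (μH[d]) Ω k ρ <
        energy (μH[d]) Ω k (fun x => if α ≤ Kop (μH[d]) Ω k ρ x then ρp else ρm)) := by
  classical
  obtain ⟨hρmeas, hρint1, hρbd⟩ := hadm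
  set ν := (μH[d]).restrict Ω with hνdef
  haveI : IsFiniteMeasure ν := ⟨by rw [Measure.restrict_apply_univ]; exact hΩfin.lt_top⟩
  have hΩmeas : MeasurableSet Ω := hΩcomp.isClosed.measurableSet
  set T : ℝ := ((μH[d]) Ω).toReal with hTdef
  have hT : 0 < T := ENNReal.toReal_pos hΩpos hΩfin
  have hρp0 : 0 < ρp := lt_of_lt_of_le (inv_pos.mpr hT) hρp
  have hmp : ρm ≤ ρp := hρm'.trans hρp
  set φ : EuclideanSpace ℝ (Fin p) → ℝ := Kop (μH[d]) Ω k ρ with hφdef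
  set ρ' : EuclideanSpace ℝ (Fin p) → ℝ := fun x => if α ≤ φ x then ρp else ρm with hρ'def
  -- bounds
  have hρb : ∀ᵐ x ∂ν, ‖ρ x‖ ≤ ρp := by
    filter_upwards [hρbd] with x hx
    rw [Real.norm_eq_abs, abs_le]
    exact ⟨by linarith [hx.1], hx.2⟩
  have hρ'b : ∀ x, ‖ρ' x‖ ≤ ρp := by
    intro x
    rw [hρ'def]
    by_cases h : α ≤ φ x
    · simp only [if_pos h]; rw [Real.norm_eq_abs, abs_of_pos hρp0]
    · simp only [if_neg h]; rw [Real.norm_eq_abs, abs_of_pos hρm]; exact hmp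
  -- measurability and integrability of φ
  have hkρ : Integrable (fun z : EuclideanSpace ℝ (Fin p) × EuclideanSpace ℝ (Fin p) =>
      k z.1 z.2 * ρ z.2) (ν.prod ν) := by
    have h1 : Integrable (fun z : EuclideanSpace ℝ (Fin p) × EuclideanSpace ℝ (Fin p) =>
        ρ z.2 * k z.1 z.2) (ν.prod ν) :=
      hint.bdd_mul (hρmeas.comp_quasiMeasurePreserving Measure.quasiMeasurePreserving_snd)
        (Measure.quasiMeasurePreserving_snd.ae hρb)
    exact h1.congr (Filter.EventuallyEq.of_eq (by funext z; ring))
  have hφmeas : AEStronglyMeasurable φ ν := hkρ.aestronglyMeasurable.integral_prod_right'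
  have hφint : Integrable φ ν := hkρ.integral_prod_left
  -- measurable version
  set φt := hφmeas.mk φ with hφtdef
  have hφt : StronglyMeasurable φt := hφmeas.stronglyMeasurable_mk
  have hφeq : φ =ᵐ[ν] φt := hφmeas.ae_eq_mk
  set St := {x | α ≤ φt x} with hStdef
  have hStmeas : MeasurableSet St := measurableSet_le measurable_const hφt.measurable
  have hSS : {x | α ≤ φ x} =ᵐ[ν] St := by
    rw [Filter.eventuallyEq_set]
    filter_upwards [hφeq] with x hx
    simp only [Set.mem_setOf_eq, hStdef, hx]
  set ρ't : EuclideanSpace ℝ (Fin p) → ℝ := fun x => if α ≤ φt x then ρp else ρm with hρ'tdef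
  have hρ'eq : ρ' =ᵐ[ν] ρ't := by
    filter_upwards [hφeq] with x hx
    rw [hρ'def, hρ'tdef]
    simp only [hx]
  have hρ'tmeas : Measurable ρ't :=
    Measurable.ite hStmeas measurable_const measurable_const
  have hρ'meas : AEStronglyMeasurable ρ' ν :=
    (hρ'tmeas.aestronglyMeasurable).congr hρ'eq.symm
  -- measure of threshold set
  have hmeasS : (ν St).toReal = ((T⁻¹ - ρm) / (ρp - ρm)) * T := by
    rw [← measure_congr hSS]; exact hα
  -- integral of ρ'
  have hρ'int : Integrable ρ' ν :=
    (integrable_const ρp).mono' hρ'meas (Filter.Eventually.of_forall hρ'b)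
  have hintρ' : ∫ x, ρ' x ∂ν = 1 := by
    have h1 : ∫ x, ρ' x ∂ν = ∫ x, ρ't x ∂ν := integral_congr_ae hρ'eq
    have h2 : ρ't = fun x => ρm + (ρp - ρm) * St.indicator (fun _ => (1 : ℝ)) x := by
      funext x
      by_cases hx : α ≤ φt x
      · have hxS : x ∈ St := hx
        rw [hρ'tdef]
        simp only [if_pos hx, Set.indicator_of_mem hxS]
        ring
      · have hxS : x ∉ St := hx
        rw [hρ'tdef]
        simp only [if_neg hx, Set.indicator_of_notMem hxS]
        ring
    have hind : Integrable (fun x => (ρp - ρm) * St.indicator (fun _ => (1 : ℝ)) x) ν :=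
      ((integrable_const (1 : ℝ)).indicator hStmeas).const_mul _
    rw [h1, h2, integral_add (integrable_const ρm) hind, integral_const,
      integral_const_mul, integral_indicator_const (1 : ℝ) hStmeas,
      measureReal_def, measureReal_def, Measure.restrict_apply_univ]
    simp only [smul_eq_mul, mul_one]
    rw [hmeasS, ← hTdef]
    rcases eq_or_lt_of_le hmp with hρeq | hlt
    · have h3 : ρm = T⁻¹ := le_antisymm hρm' (hρeq ▸ hρp)
      rw [← hρeq, sub_self, h3]
      rw [mul_comm]
      rw [inv_mul_cancel₀ hT.ne']
      ring
    · have hne : ρp - ρm ≠ 0 := sub_ne_zero.mpr (ne_of_gt hlt)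
      have h4 : (ρp - ρm) * ((T⁻¹ - ρm) / (ρp - ρm) * T) = (T⁻¹ - ρm) * T := by
        field_simp
      rw [h4, sub_mul, inv_mul_cancel₀ hT.ne']
      ring
  have hadm' : IsAdmissible (μH[d]) Ω ρp ρm ρ' := by
    refine ⟨hρ'meas, hintρ', Filter.Eventually.of_forall fun x => ?_⟩
    rw [hρ'def]
    by_cases h : α ≤ φ x
    · simp only [if_pos h]; exact ⟨hmp, le_refl _⟩
    · simp only [if_neg h]; exact ⟨le_refl _, hmp⟩
  refine ⟨hadm', fun hne => ?_⟩
  -- the strict energy increase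
  set σ : EuclideanSpace ℝ (Fin p) → ℝ := fun x => ρ' x - ρ x with hσdef
  have hσmeas : AEStronglyMeasurable σ ν := hρ'meas.sub hρmeas
  have hσb : ∀ᵐ x ∂ν, ‖σ x‖ ≤ 2 * ρp := by
    filter_upwards [hρb] with x hx
    calc ‖ρ' x - ρ x‖ ≤ ‖ρ' x‖ + ‖ρ x‖ := norm_sub_le _ _
    _ ≤ ρp + ρp := add_le_add (hρ'b x) hx
    _ = 2 * ρp := by ring
  have hσ0 : ¬ (σ =ᵐ[ν] (fun _ => (0 : ℝ))) := by
    intro h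
    exact hne (h.mono fun x hx => sub_eq_zero.mp hx)
  have hEσ : 0 < energy (μH[d]) Ω k σ := by
    refine hpos σ hσmeas ⟨2 * ρp, ?_⟩ hσ0
    filter_upwards [hσb] with x hx
    exact hx
  -- symmetry of k a.e. on the product
  have hsymm : ∀ᵐ z : EuclideanSpace ℝ (Fin p) × EuclideanSpace ℝ (Fin p) ∂ν.prod ν,
      (fun w : EuclideanSpace ℝ (Fin p) × EuclideanSpace ℝ (Fin p) => k w.1 w.2) z
        = (fun w : EuclideanSpace ℝ (Fin p) × EuclideanSpace ℝ (Fin p) => k w.1 w.2) z.swap := by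
    have h1 : ∀ᵐ x ∂ν, x ∈ Ω := ae_restrict_mem hΩmeas
    filter_upwards [Measure.quasiMeasurePreserving_fst.ae h1,
      Measure.quasiMeasurePreserving_snd.ae h1] with z hz1 hz2
    simp only [Prod.fst_swap, Prod.snd_swap]
    rw [hkf z.1 hz1 z.2 hz2, hkf z.2 hz2 z.1 hz1, dist_comm]
  have hstep := energy_step (ν := ν)
    (K := fun w : EuclideanSpace ℝ (Fin p) × EuclideanSpace ℝ (Fin p) => k w.1 w.2)
    hint hsymm hρmeas hσmeas hρb hσb
  -- restate in iterated-set-integral form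
  have hstep' : ∫ x in Ω, (∫ y in Ω, k x y * (ρ x + σ x) * (ρ y + σ y) ∂(μH[d])) ∂(μH[d])
      = (∫ x in Ω, (∫ y in Ω, k x y * ρ x * ρ y ∂(μH[d])) ∂(μH[d]))
        + 2 * (∫ x, σ x * φ x ∂ν)
        + (∫ x in Ω, (∫ y in Ω, k x y * σ x * σ y ∂(μH[d])) ∂(μH[d])) := hstep
  -- integrabilities for the cross term
  have hρint : Integrable ρ ν := (integrable_const ρp).mono' hρmeas hρb
  have hσint : Integrable σ ν := hρ'int.sub hρint
  have hσ_zero : ∫ x, σ x ∂ν = 0 := by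
    have : ∫ x, σ x ∂ν = (∫ x, ρ' x ∂ν) - ∫ x, ρ x ∂ν := integral_sub hρ'int hρint
    rw [this, hintρ', hρint1]
    ring
  have hσφint : Integrable (fun x => σ x * φ x) ν := hφint.bdd_mul hσmeas hσb
  have hnn : 0 ≤ ∫ x, σ x * (φ x - α) ∂ν := by
    refine integral_nonneg_of_ae ?_
    filter_upwards [hρbd] with x hx
    show (0:ℝ) ≤ σ x * (φ x - α)
    by_cases h : α ≤ φ x
    · have h1 : σ x = ρp - ρ x := by rw [hσdef]; simp only [hρ'def, if_pos h]
      have h2 : 0 ≤ σ x := by rw [h1]; linarith [hx.2]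
      exact mul_nonneg h2 (by linarith)
    · have h1 : σ x = ρm - ρ x := by rw [hσdef]; simp only [hρ'def, if_neg h]
      have h2 : σ x ≤ 0 := by rw [h1]; linarith [hx.1]
      have h3 : φ x - α ≤ 0 := by linarith [lt_of_not_ge h]
      nlinarith [mul_nonneg (neg_nonneg.mpr h2) (neg_nonneg.mpr h3)]
  have hkey : 0 ≤ ∫ x, σ x * φ x ∂ν := by
    have hsplit : ∫ x, σ x * (φ x - α) ∂ν
        = (∫ x, σ x * φ x ∂ν) - α * ∫ x, σ x ∂ν := by
      rw [← integral_const_mul, ← integral_sub hσφint (hσint.const_mul α)]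
      congr 1; funext x; ring
    rw [hsplit, hσ_zero] at hnn
    linarith
  -- put everything together
  have hρ'sum : ρ' = fun x => ρ x + σ x := by
    funext x; rw [hσdef]; ring
  have hE : energy (μH[d]) Ω k ρ' = energy (μH[d]) Ω k ρ
      + (∫ x, σ x * φ x ∂ν) + energy (μH[d]) Ω k σ := by
    rw [hρ'sum]
    unfold energy
    rw [hstep']
    ring
  rw [hE]
  linarith

end
end
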